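/- arXiv:2504.01124 — 2 statements merged into one kernel-verified Lean document; each statement's English description precedes it below -/
import Mathlib

section
/- A distributive nearlattice A is quasicomplemented if and only if for each a ∈ A there exists b ∈ A such that a maximal ideal meets a⊤⊤ precisely when it meets b⊤; that is, ψ[a⊤⊤] ∩ X_m(A) = ψ[b⊤] ∩ X_m(A), where ψ[Y] = {P prime ideal : Y ∩ P ≠ ∅}. -/
/-- A distributive nearlattice, presented (following Araújo–Kinyon) as a
join-semilattice with top together with its canonical ternary operation
`m x y z = (x ⊔ z) ⊓_z (y ⊔ z)` (the meet taken in the principal filter `[z)`),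
satisfying the Araújo–Kinyon identities.  This is equivalent to: every
principal filter is a bounded distributive lattice. -/
class DNearlattice (A : Type*) extends SemilatticeSup A, OrderTop A where
  m : A → A → A → A
  sup_eq_m : ∀ x y : A, x ⊔ y = m x x y
  m_ax2 : ∀ x y : A, m x y x = x
  m_ax3 : ∀ u w x y z : A,
    m (m x y z) (m y (m u x z) z) w = m w w (m y (m x u z) z)
  m_ax4 : ∀ w x y z : A,
    m x (m y y z) w = m (m x y w) (m x y w) (m x z w)

variable {A : Type*} [DNearlattice A]

/-- The annihilator `a⊤ = {x | x ⊔ a = ⊤}`. -/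
def ann (a : A) : Set A := {x : A | x ⊔ a = ⊤}

/-- The annihilator of a set (filter): `F⊤ = {x | ∀ f ∈ F, x ⊔ f = ⊤}`. -/
def annF (F : Set A) : Set A := {x : A | ∀ f ∈ F, x ⊔ f = ⊤}

/-- The double annihilator `a⊤⊤`. -/
def dann (a : A) : Set A := annF (ann a)

/-- A filter: contains `⊤`, is upward closed, and is closed under existing
binary meets (greatest lower bounds). -/
def IsFil (F : Set A) : Prop :=
  ⊤ ∈ F ∧ (∀ a b : A, a ≤ b → a ∈ F → b ∈ F) ∧
    (∀ a b c : A, a ∈ F → b ∈ F → IsGLB {a, b} c → c ∈ F)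

/-- The filter generated by a set: the intersection of all filters containing it. -/
def filGen (X : Set A) : Set A := ⋂₀ {F : Set A | IsFil F ∧ X ⊆ F}

/-- The join of two filters in the lattice of filters. -/
def filJoin (F G : Set A) : Set A := filGen (F ∪ G)

/-- An ideal: downward closed and closed under joins. -/
def IsIdl (I : Set A) : Prop :=
  (∀ a b : A, a ≤ b → b ∈ I → a ∈ I) ∧ (∀ a b : A, a ∈ I → b ∈ I → a ⊔ b ∈ I)

/-- A prime ideal: a nonempty proper ideal such that whenever an existing
meet `a ∧ b` lies in it, `a` or `b` lies in it. -/
def IsPrimeIdl (P : Set A) : Prop :=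
  IsIdl P ∧ P.Nonempty ∧ P ≠ Set.univ ∧
    (∀ a b c : A, IsGLB {a, b} c → c ∈ P → a ∈ P ∨ b ∈ P)

/-- A maximal ideal: a nonempty proper ideal maximal among proper ideals. -/
def IsMaxIdl (I : Set A) : Prop :=
  IsIdl I ∧ I.Nonempty ∧ I ≠ Set.univ ∧
    (∀ J : Set A, IsIdl J → I ⊆ J → J = I ∨ J = Set.univ)

/-- A prime filter: `a ⊔ b ∈ F` implies `a ∈ F` or `b ∈ F`. -/
def IsPrimeFil (F : Set A) : Prop :=
  IsFil F ∧ ∀ a b : A, a ⊔ b ∈ F → a ∈ F ∨ b ∈ F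

/-- An α-filter: a filter containing `a⊤⊤` for each of its elements `a`. -/
def IsAlphaFil (F : Set A) : Prop := IsFil F ∧ ∀ a ∈ F, dann a ⊆ F

/-- An α-ideal: an ideal `I` such that `I ∩ a⊤⊤ ≠ ∅` implies `a ∈ I`. -/
def IsAlphaIdl (I : Set A) : Prop :=
  IsIdl I ∧ ∀ a : A, (I ∩ dann a).Nonempty → a ∈ I

/-- Quasicomplemented: every `a⊤⊤` is of the form `b⊤`. -/
def Quasicomplemented (B : Type*) [DNearlattice B] : Prop :=
  ∀ a : B, ∃ b : B, dann a = ann b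

/-- Normal: `(a ⊔ b)⊤ = a⊤ ⋎ b⊤` for all `a, b`. -/
def NormalNL (B : Type*) [DNearlattice B] : Prop :=
  ∀ a b : B, ann (a ⊔ b) = filJoin (ann a) (ann b)

/-- Stone: `a⊤ ⋎ a⊤⊤ = A` for all `a`. -/
def StoneNL (B : Type*) [DNearlattice B] : Prop :=
  ∀ a : B, filJoin (ann a) (dann a) = Set.univ


section Aux

open DNearlattice

lemma sup_m (x y : A) : m x x y = x ⊔ y := (sup_eq_m x y).symm

/-- Araújo–Kinyon axiom (3) with `u := x`. -/
lemma mA (x y z w : A) :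
    m (m x y z) (m y (x ⊔ z) z) w = w ⊔ m y (x ⊔ z) z := by
  simpa only [sup_m] using m_ax3 x w x y z

lemma m_szw (x z w : A) : m (m x z z) z w = w ⊔ z := by
  have h := mA x z z w
  rwa [m_ax2] at h

lemma le_m_xzz (x z : A) : z ≤ m x z z := by
  have h := m_szw x z (m x z z)
  rw [m_ax2] at h
  exact le_sup_right.trans h.symm.le

lemma m_yzz (y z : A) : m y z z = z := by
  have h := mA z y z z
  simp only [m_ax2, sup_idem] at h
  exact le_antisymm (le_sup_right.trans h.symm.le) (le_m_xzz y z)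

lemma m_p_z_w (x y z w : A) : m (m x y z) z w = w ⊔ z := by
  have h := m_ax3 z w x y z
  simpa only [m_ax2, m_yzz, sup_m] using h

lemma le_m (x y z : A) : z ≤ m x y z := by
  have h := m_p_z_w x y z (m x y z)
  rw [m_ax2] at h
  exact le_sup_right.trans h.symm.le

lemma m_sup_right (x y z w : A) : m x (y ⊔ z) w = m x y w ⊔ m x z w := by
  simpa only [sup_m] using m_ax4 w x y z

lemma m_mono2 {y y' : A} (h : y ≤ y') (x z : A) : m x y z ≤ m x y' z := by
  have h2 : m x (y ⊔ y') z = m x y z ⊔ m x y' z := m_sup_right x y y' z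
  rw [sup_eq_right.mpr h] at h2
  exact le_sup_left.trans h2.symm.le

lemma m_absorb_z (x y z : A) : m x (y ⊔ z) z = m x y z := by
  rw [m_sup_right, m_yzz]
  exact sup_eq_left.mpr (le_m x y z)

lemma m_comm (x y z : A) : m x y z = m y x z := by
  have hle : ∀ a b c : A, m b a c ≤ m a b c := by
    intro a b c
    have h := mA a b c (m a b c)
    rw [m_absorb_z, m_ax2] at h
    exact le_sup_right.trans h.symm.le
  exact le_antisymm (hle y x z) (hle x y z)

lemma m_nested_le (x y z u : A) : m y (m x u z) z ≤ m x y z := by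
  have h := m_ax3 u (m x y z) x y z
  rw [m_ax2, sup_m] at h
  exact le_sup_right.trans h.symm.le

lemma le_m_top (x z : A) : x ⊔ z ≤ m x ⊤ z := by
  have h := m_mono2 (le_top : x ≤ ⊤) x z
  rwa [sup_m] at h

lemma m_G_le (x z : A) : m x (m ⊤ x z) z ≤ x ⊔ z := by
  have h := m_nested_le (x ⊔ z) x z ⊤
  rw [m_comm (x ⊔ z) ⊤ z, m_absorb_z, m_comm (x ⊔ z) x z, m_absorb_z, sup_m] at h
  exact h

lemma m_top_eq (x z : A) : m ⊤ x z = x ⊔ z := by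
  have h1 : m (m ⊤ x z) (m x ⊤ z) z ≤ m x (m ⊤ x z) z := m_nested_le x (m ⊤ x z) z ⊤
  rw [m_comm x ⊤ z, sup_m] at h1
  have h2 : m ⊤ x z ⊔ z = m ⊤ x z := sup_eq_left.mpr (le_m ⊤ x z)
  rw [h2] at h1
  exact le_antisymm (h1.trans (m_G_le x z)) ((le_m_top x z).trans (m_comm x ⊤ z).le)

lemma m_le_sup_left (x y z : A) : m x y z ≤ x ⊔ z := by
  have h := m_mono2 (le_top : y ≤ ⊤) x z
  rw [m_comm x ⊤ z, m_top_eq] at h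
  exact h

lemma m_le_sup_right (x y z : A) : m x y z ≤ y ⊔ z := by
  rw [m_comm]; exact m_le_sup_left y x z

/-- Key distributivity fact: if `c = a ⊓ b` exists and `a ⊔ w = b ⊔ w = ⊤`
then `c ⊔ w = ⊤`. -/
lemma key_glb {a b c w : A} (h : IsGLB {a, b} c) (ha : a ⊔ w = ⊤)
    (hb : b ⊔ w = ⊤) : c ⊔ w = ⊤ := by
  have hca : c ≤ a := h.1 (by simp)
  have hcb : c ≤ b := h.1 (by simp)
  have h1 : m b a c = c := by
    refine le_antisymm (h.2 ?_) (le_m b a c)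
    intro t ht
    rcases ht with h' | h'
    · rw [show t = a from h']
      exact (m_le_sup_right b a c).trans (sup_eq_left.mpr hca).le
    · rw [show t = b from h']
      exact (m_le_sup_left b a c).trans (sup_eq_left.mpr hcb).le
  have h2 : m b ⊤ c = b := by
    refine le_antisymm ?_ ?_
    · exact (m_le_sup_left b ⊤ c).trans (sup_eq_left.mpr hcb).le
    · exact (sup_eq_left.mpr hcb).symm.le.trans (le_m_top b c)
  have h3 : m b (a ⊔ w) c = m b a c ⊔ m b w c := m_sup_right b a w c
  rw [ha, h1, h2] at h3
  have h4 : m b w c ≤ w ⊔ c := m_le_sup_right b w c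
  refine top_unique ?_
  rw [← hb, h3]
  refine sup_le (sup_le le_sup_left (h4.trans ?_)) le_sup_right
  exact sup_le le_sup_right le_sup_left

lemma top_not_mem {U : Set A} (hU : IsMaxIdl U) : ⊤ ∉ U := fun h =>
  hU.2.2.1 (Set.eq_univ_of_forall fun x => hU.1.1 x ⊤ le_top h)

lemma exists_maxIdl {I : Set A} (hI : IsIdl I) (hne : I.Nonempty)
    (hproper : ⊤ ∉ I) : ∃ U : Set A, IsMaxIdl U ∧ I ⊆ U := by
  set S : Set (Set A) := {J | IsIdl J ∧ ⊤ ∉ J ∧ I ⊆ J} with hS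
  have hIS : I ∈ S := ⟨hI, hproper, subset_rfl⟩
  have hchainH : ∀ c ⊆ S, IsChain (· ⊆ ·) c → c.Nonempty →
      ∃ ub ∈ S, ∀ s ∈ c, s ⊆ ub := by
    intro c hcS hchain hcne
    refine ⟨⋃₀ c, ⟨⟨?_, ?_⟩, ?_, ?_⟩, fun s hs => Set.subset_sUnion_of_mem hs⟩
    · rintro p q hpq ⟨J, hJ, hqJ⟩
      exact ⟨J, hJ, (hcS hJ).1.1 p q hpq hqJ⟩
    · rintro p q ⟨J, hJ, hpJ⟩ ⟨K, hK, hqK⟩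
      rcases eq_or_ne J K with rfl | hne'
      · exact ⟨J, hJ, (hcS hJ).1.2 p q hpJ hqK⟩
      · rcases hchain hJ hK hne' with hsub | hsub
        · exact ⟨K, hK, (hcS hK).1.2 p q (hsub hpJ) hqK⟩
        · exact ⟨J, hJ, (hcS hJ).1.2 p q hpJ (hsub hqK)⟩
    · rintro ⟨J, hJ, hTJ⟩
      exact (hcS hJ).2.1 hTJ
    · obtain ⟨J, hJ⟩ := hcne
      exact (hcS hJ).2.2.trans (Set.subset_sUnion_of_mem hJ)
  obtain ⟨U, hIU, hUS, hmax⟩ := zorn_subset_nonempty S hchainH I hIS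
  refine ⟨U, ⟨hUS.1, hne.mono hIU, fun h => hUS.2.1 (h.symm ▸ Set.mem_univ ⊤), ?_⟩, hIU⟩
  intro J hJ hUJ
  by_cases hT : ⊤ ∈ J
  · exact Or.inr (Set.eq_univ_of_forall fun x => hJ.1 x ⊤ le_top hT)
  · exact Or.inl (le_antisymm (hmax ⟨hJ, hT, hUS.2.2.trans hUJ⟩ hUJ) hUJ)

lemma exists_max_both {x f : A} (h : x ⊔ f ≠ ⊤) :
    ∃ U : Set A, IsMaxIdl U ∧ x ∈ U ∧ f ∈ U := by
  obtain ⟨U, hU, hsub⟩ := exists_maxIdl (I := Set.Iic (x ⊔ f))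
    ⟨fun a b hab hb => hab.trans hb, fun a b ha hb => sup_le ha hb⟩
    ⟨x ⊔ f, le_rfl⟩ (fun hT => h (top_unique hT))
  exact ⟨U, hU, hsub le_sup_left, hsub le_sup_right⟩

lemma maxIdl_meets_ann {U : Set A} (hU : IsMaxIdl U) {a : A} (ha : a ∉ U) :
    (ann a ∩ U).Nonempty := by
  set J : Set A := {z | ∃ u ∈ U, z ≤ u ⊔ a} with hJdef
  have hJidl : IsIdl J := by
    constructor
    · rintro p q hpq ⟨u, hu, hq⟩
      exact ⟨u, hu, hpq.trans hq⟩
    · rintro p q ⟨u, hu, hp⟩ ⟨v, hv, hq⟩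
      exact ⟨u ⊔ v, hU.1.2 u v hu hv,
        sup_le (hp.trans (sup_le (le_sup_left.trans le_sup_left) le_sup_right))
          (hq.trans (sup_le (le_sup_right.trans le_sup_left) le_sup_right))⟩
  have hUJ : U ⊆ J := fun u hu => ⟨u, hu, le_sup_left⟩
  obtain ⟨u0, hu0⟩ := hU.2.1
  have haJ : a ∈ J := ⟨u0, hu0, le_sup_right⟩
  rcases hU.2.2.2 J hJidl hUJ with hEq | hEq
  · exact absurd (hEq ▸ haJ) ha
  · have hTJ : ⊤ ∈ J := hEq ▸ Set.mem_univ ⊤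
    obtain ⟨u, hu, hle⟩ := hTJ
    exact ⟨u, top_unique hle, hu⟩

lemma maxIdl_prime {U : Set A} (hU : IsMaxIdl U) : IsPrimeIdl U := by
  refine ⟨hU.1, hU.2.1, hU.2.2.1, ?_⟩
  intro a b c hglb hc
  by_contra hab
  push_neg at hab
  obtain ⟨u, hua, huU⟩ := maxIdl_meets_ann hU hab.1
  obtain ⟨v, hvb, hvU⟩ := maxIdl_meets_ann hU hab.2
  have hw : u ⊔ v ∈ U := hU.1.2 u v huU hvU
  have ha' : a ⊔ (u ⊔ v) = ⊤ := by
    have h : u ⊔ a ≤ a ⊔ (u ⊔ v) :=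
      sup_le ((le_sup_left : u ≤ u ⊔ v).trans le_sup_right) le_sup_left
    exact top_unique (hua ▸ h)
  have hb' : b ⊔ (u ⊔ v) = ⊤ := by
    have h : v ⊔ b ≤ b ⊔ (u ⊔ v) :=
      sup_le ((le_sup_right : v ≤ u ⊔ v).trans le_sup_right) le_sup_left
    exact top_unique (hvb ▸ h)
  have hcw : c ⊔ (u ⊔ v) = ⊤ := key_glb hglb ha' hb'
  exact top_not_mem hU (hcw ▸ hU.1.2 c (u ⊔ v) hc hw)

lemma ann_disjoint {U : Set A} (hU : IsMaxIdl U) {a x : A} (haU : a ∈ U)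
    (hx : x ∈ ann a) : x ∉ U := fun hxU => by
  have h : x ⊔ a = ⊤ := hx
  exact top_not_mem hU (h ▸ hU.1.2 x a hxU haU)

end Aux

/-- `A` is quasicomplemented iff for each `a` there is `b` such that the
maximal ideals meeting `a⊤⊤` are exactly those meeting `b⊤`. -/
theorem stmt4 :
    Quasicomplemented A ↔
      ∀ a : A, ∃ b : A,
        {P : Set A | IsPrimeIdl P ∧ (dann a ∩ P).Nonempty} ∩
            {P : Set A | IsMaxIdl P} =
          {P : Set A | IsPrimeIdl P ∧ (ann b ∩ P).Nonempty} ∩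
            {P : Set A | IsMaxIdl P} := by
  constructor
  · intro hq a
    obtain ⟨b, hb⟩ := hq a
    exact ⟨b, by rw [hb]⟩
  · intro H a
    obtain ⟨b, hb⟩ := H a
    have hiff : ∀ U : Set A, IsMaxIdl U →
        ((dann a ∩ U).Nonempty ↔ (ann b ∩ U).Nonempty) := by
      intro U hU
      have h1 := Set.ext_iff.mp hb U
      simp only [Set.mem_inter_iff, Set.mem_setOf_eq] at h1
      constructor
      · intro hne; exact (h1.mp ⟨⟨maxIdl_prime hU, hne⟩, hU⟩).1.2
      · intro hne; exact (h1.mpr ⟨⟨maxIdl_prime hU, hne⟩, hU⟩).1.2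
    refine ⟨b, Set.Subset.antisymm ?_ ?_⟩
    · -- dann a ⊆ ann b
      intro x hx
      by_contra hxb
      have hxb' : x ⊔ b ≠ ⊤ := hxb
      obtain ⟨U, hU, hxU, hbU⟩ := exists_max_both hxb'
      obtain ⟨f, hf, hfU⟩ := (hiff U hU).mp ⟨x, hx, hxU⟩
      exact ann_disjoint hU hbU hf hfU
    · -- ann b ⊆ dann a
      intro x hx
      intro f hf
      by_contra hxf
      obtain ⟨U, hU, hxU, hfU⟩ := exists_max_both hxf
      obtain ⟨d, hd, hdU⟩ := (hiff U hU).mpr ⟨x, hx, hxU⟩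
      have hdf : d ⊔ f = ⊤ := hd f hf
      exact top_not_mem hU (hdf ▸ hU.1.2 d f hdU hfU)
end

section
/- Let A be a normal and quasicomplemented distributive nearlattice and F an α-filter. Then I_F = {x ∈ A : ∃ f ∈ F with x⊤ ⊆ f⊤⊤} is an α-ideal of A. -/
variable {A : Type*} [DNearlattice A]

lemma ann_mono' {a b : A} (h : a ≤ b) : ann a ⊆ ann b := fun x hx =>
  le_antisymm le_top (hx ▸ sup_le_sup_left h x)

lemma mem_ann_comm' {a b : A} (h : a ∈ ann b) : b ∈ ann a := by
  simpa [ann, sup_comm] using h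

lemma subset_annF_annF' (X : Set A) : X ⊆ annF (annF X) :=
  fun x hx y hy => mem_ann_comm' (a := y) (b := x) (hy x hx)

lemma mem_dann_self' (a : A) : a ∈ dann a := fun y hy => mem_ann_comm' hy

lemma ann_subset_of_mem_dann' {a x : A} (hx : x ∈ dann a) : ann a ⊆ ann x :=
  fun y hy => mem_ann_comm' (hx y hy)

lemma filGen_subset' {X F : Set A} (hF : IsFil F) (hX : X ⊆ F) : filGen X ⊆ F :=
  Set.sInter_subset_of_mem ⟨hF, hX⟩

lemma filGen_mono' {X Y : Set A} (h : X ⊆ Y) : filGen X ⊆ filGen Y := by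
  intro x hx
  simp only [filGen, Set.mem_sInter, Set.mem_setOf_eq] at hx ⊢
  exact fun G hG => hx G ⟨hG.1, h.trans hG.2⟩

/-- For an α-filter `F` of a normal quasicomplemented distributive
nearlattice, `I_F = {x | ∃ f ∈ F, x⊤ ⊆ f⊤⊤}` is an α-ideal. -/
theorem stmt10 (hn : NormalNL A) (hq : Quasicomplemented A)
    (F : Set A) (hF : IsAlphaFil F) :
    IsAlphaIdl {x : A | ∃ f ∈ F, ann x ⊆ dann f} := by
  constructor
  · constructor
    · rintro a b hab ⟨f, hf, hsub⟩
      exact ⟨f, hf, (ann_mono' hab).trans hsub⟩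
    · rintro a b ⟨f, hf, hfa⟩ ⟨g, hg, hgb⟩
      obtain ⟨f1, hf1⟩ := hq f
      obtain ⟨g1, hg1⟩ := hq g
      obtain ⟨h, hh⟩ := hq (f1 ⊔ g1)
      have key : ann (f1 ⊔ g1) ⊆ dann h := by
        have := subset_annF_annF' (ann (f1 ⊔ g1))
        have e : annF (ann (f1 ⊔ g1)) = ann h := hh
        rw [e] at this
        exact this
      have hFG : ann (f1 ⊔ g1) = filJoin (dann f) (dann g) := by
        rw [hn f1 g1, hf1, hg1]
      have hhF : h ∈ F := by
        have h1 : f1 ⊔ g1 ∈ ann h := by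
          rw [← hh]; exact mem_dann_self' (f1 ⊔ g1)
        have h2 : h ∈ ann (f1 ⊔ g1) := mem_ann_comm' h1
        rw [hFG] at h2
        have hsubF : filJoin (dann f) (dann g) ⊆ F :=
          filGen_subset' hF.1 (Set.union_subset (hF.2 f hf) (hF.2 g hg))
        exact hsubF h2
      refine ⟨h, hhF, ?_⟩
      have : ann (a ⊔ b) ⊆ ann (f1 ⊔ g1) := by
        rw [hn a b, hFG]
        exact filGen_mono' (Set.union_subset_union hfa hgb)
      exact this.trans key
  · rintro a ⟨x, ⟨f, hf, hsub⟩, hx⟩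
    exact ⟨f, hf, (ann_subset_of_mem_dann' hx).trans hsub⟩
end
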